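/- arXiv:1512.01635 — 5 statements merged into one kernel-verified Lean document; each statement's English description precedes it below -/
import Mathlib

section
/- Let X be a real normed space of dimension ≥ n satisfying property (G) with semi-inner product g. Let x₁,...,xₙ ∈ X be linearly independent and let x₁°,...,xₙ° be the left g-orthogonal sequence obtained by Gram–Schmidt with respect to g (so x₁° = x₁ and xᵢ° = xᵢ minus its Gram–Schmidt projection onto span{x₁,...,x_{i−1}}). Then ‖x₁°‖⋯‖xₙ°‖ ≤ ‖x₁,...,xₙ‖_G, where ‖·,...,·‖_G is the Gähler n-norm. -/
open scoped BigOperators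

/-- The Gähler `n`-norm on a real normed space. -/
noncomputable def gahler {X : Type*} [NormedAddCommGroup X] [NormedSpace ℝ X] {n : ℕ}
    (x : Fin n → X) : ℝ :=
  sSup {r | ∃ f : Fin n → (X →L[ℝ] ℝ), (∀ i, ‖f i‖ ≤ 1) ∧
    r = |Matrix.det (Matrix.of fun i j => f j (x i))|}

/-- The Miličić functional. -/
noncomputable def milicic {X : Type*} [NormedAddCommGroup X] [NormedSpace ℝ X]
    (τp τm : X → X → ℝ) (x y : X) : ℝ :=
  ‖x‖ / 2 * (τm x y + τp x y)

/-- For linearly independent `x₁,…,xₙ` with left `g`-orthogonal sequence `x₁°,…,xₙ°`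
(obtained by Gram–Schmidt with respect to `g`), one has `‖x₁°‖⋯‖xₙ°‖ ≤ ‖x₁,…,xₙ‖_G`. -/
theorem stmt9 {X : Type*} [NormedAddCommGroup X] [NormedSpace ℝ X] (n : ℕ)
    (hdim : (n : Cardinal) ≤ Module.rank ℝ X)
    (τp τm : X → X → ℝ)
    (hτp : ∀ x y : X, Filter.Tendsto (fun t : ℝ => (‖x + t • y‖ - ‖x‖) / t)
      (nhdsWithin 0 (Set.Ioi 0)) (nhds (τp x y)))
    (hτm : ∀ x y : X, Filter.Tendsto (fun t : ℝ => (‖x + t • y‖ - ‖x‖) / t)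
      (nhdsWithin 0 (Set.Iio 0)) (nhds (τm x y)))
    (hG : ∀ x : X, IsLinearMap ℝ (fun y => milicic τp τm x y))
    (x : Fin n → X) (hx : LinearIndependent ℝ x)
    (y : Fin n → X)
    -- `y i = x i` minus its Gram–Schmidt projection onto `span {x₁,…,x_{i-1}}`
    (hproj : ∀ i, x i - y i ∈ Submodule.span ℝ (x '' {j | j < i}))
    -- left `g`-orthogonality
    (horth : ∀ i j, i < j → milicic τp τm (y i) (y j) = 0) :
    ∏ i, ‖y i‖ ≤ gahler x := by
  classical
  set g : X → X → ℝ := milicic τp τm with hgdef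
  -- pointwise bound on the difference quotient
  have hquot : ∀ (v w : X) (t : ℝ), t ≠ 0 → |(‖v + t • w‖ - ‖v‖) / t| ≤ ‖w‖ := by
    intro v w t ht
    rw [abs_div, div_le_iff₀ (abs_pos.2 ht)]
    calc |‖v + t • w‖ - ‖v‖| ≤ ‖(v + t • w) - v‖ := abs_norm_sub_norm_le _ _
      _ = ‖t • w‖ := by simp
      _ = ‖w‖ * |t| := by rw [norm_smul, Real.norm_eq_abs, mul_comm]
  have hτp_le : ∀ v w : X, |τp v w| ≤ ‖w‖ := fun v w =>
    le_of_tendsto (hτp v w).abs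
      (eventually_nhdsWithin_of_forall fun t ht => hquot v w t (ne_of_gt ht))
  have hτm_le : ∀ v w : X, |τm v w| ≤ ‖w‖ := fun v w =>
    le_of_tendsto (hτm v w).abs
      (eventually_nhdsWithin_of_forall fun t ht => hquot v w t (ne_of_lt ht))
  have habs : ∀ v w : X, |g v w| ≤ ‖v‖ * ‖w‖ := by
    intro v w
    have h1 : |τm v w + τp v w| ≤ ‖w‖ + ‖w‖ :=
      (abs_add_le _ _).trans (add_le_add (hτm_le v w) (hτp_le v w))
    calc |g v w| = ‖v‖ / 2 * |τm v w + τp v w| := by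
          rw [hgdef]; unfold milicic
          rw [abs_mul, abs_of_nonneg (by positivity : (0:ℝ) ≤ ‖v‖ / 2)]
      _ ≤ ‖v‖ / 2 * (‖w‖ + ‖w‖) :=
          mul_le_mul_of_nonneg_left h1 (by positivity)
      _ = ‖v‖ * ‖w‖ := by ring
  -- value on the diagonal
  have hval : ∀ (v : X) (t : ℝ), -1 < t → t ≠ 0 → (‖v + t • v‖ - ‖v‖) / t = ‖v‖ := by
    intro v t h1 h0
    have h : v + t • v = (1 + t) • v := by rw [add_smul, one_smul]
    rw [h, norm_smul, Real.norm_eq_abs, abs_of_pos (by linarith)]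
    field_simp
    ring
  have hτp_self : ∀ v : X, τp v v = ‖v‖ := by
    intro v
    refine tendsto_nhds_unique (hτp v v) (tendsto_const_nhds.congr' ?_)
    filter_upwards [self_mem_nhdsWithin] with t ht
    exact (hval v t (by linarith [Set.mem_Ioi.1 ht]) (ne_of_gt ht)).symm
  have hτm_self : ∀ v : X, τm v v = ‖v‖ := by
    intro v
    refine tendsto_nhds_unique (hτm v v) (tendsto_const_nhds.congr' ?_)
    filter_upwards [Ioo_mem_nhdsLT (by norm_num : (-1:ℝ) < 0)] with t ht
    exact (hval v t ht.1 (ne_of_lt ht.2)).symm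
  have hself : ∀ v : X, g v v = ‖v‖ ^ 2 := by
    intro v
    rw [hgdef]; unfold milicic
    rw [hτp_self, hτm_self]; ring
  -- continuous linear functionals
  let F : X → X →L[ℝ] ℝ := fun v =>
    LinearMap.mkContinuous (IsLinearMap.mk' _ (hG v)) ‖v‖
      (fun w => by simpa [Real.norm_eq_abs] using habs v w)
  have hFnorm : ∀ v : X, ‖F v‖ ≤ ‖v‖ :=
    fun v => LinearMap.mkContinuous_norm_le _ (norm_nonneg v) _
  have hFapp : ∀ v w : X, F v w = g v w := fun v w => rfl
  -- y i ≠ 0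
  have hy0 : ∀ i, y i ≠ 0 := by
    intro i h0
    have : x i ∈ Submodule.span ℝ (x '' {j | j < i}) := by
      have := hproj i; rwa [h0, sub_zero] at this
    exact hx.notMem_span_image (by simp) this
  have hynorm : ∀ i, ‖y i‖ ≠ 0 := fun i => norm_ne_zero_iff.2 (hy0 i)
  -- the functionals
  let f : Fin n → X →L[ℝ] ℝ := fun j => ‖y j‖⁻¹ • F (y j)
  have hf1 : ∀ j, ‖f j‖ ≤ 1 := by
    intro j
    refine ContinuousLinearMap.opNorm_le_bound _ zero_le_one fun w => ?_
    have hfw : f j w = ‖y j‖⁻¹ * g (y j) w := rfl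
    have h1 : |g (y j) w| ≤ ‖y j‖ * ‖w‖ := habs _ _
    rw [hfw, Real.norm_eq_abs, abs_mul,
      abs_of_nonneg (by positivity : (0:ℝ) ≤ ‖y j‖⁻¹)]
    calc ‖y j‖⁻¹ * |g (y j) w| ≤ ‖y j‖⁻¹ * (‖y j‖ * ‖w‖) :=
          mul_le_mul_of_nonneg_left h1 (by positivity)
      _ = 1 * ‖w‖ := by
          rw [← mul_assoc, inv_mul_cancel₀ (hynorm j)]
  -- coefficients of the projections
  have hcoef : ∀ i, ∃ l : Fin n →₀ ℝ, (∀ k, ¬ k < i → l k = 0) ∧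
      Finsupp.linearCombination ℝ x l = x i - y i := by
    intro i
    obtain ⟨l, hl, hl2⟩ := (Finsupp.mem_span_image_iff_linearCombination ℝ).1 (hproj i)
    exact ⟨l, fun k hk => Finsupp.notMem_support_iff.1 (fun hmem => hk (hl hmem)), hl2⟩
  choose l hl0 hlc using hcoef
  set A : Matrix (Fin n) (Fin n) ℝ := Matrix.of fun i j => f j (x i) with hA
  set B : Matrix (Fin n) (Fin n) ℝ := Matrix.of fun i j => f j (y i) with hB
  set L : Matrix (Fin n) (Fin n) ℝ :=
    (1 : Matrix (Fin n) (Fin n) ℝ) - Matrix.of (fun i k => l i k) with hL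
  -- B = L * A
  have hsum : ∀ i (φ : X →L[ℝ] ℝ), φ (x i - y i) = ∑ k, l i k * φ (x k) := by
    intro i φ
    rw [← hlc i, Finsupp.linearCombination_apply, Finsupp.sum_fintype _ _ (by simp)]
    rw [map_sum]
    simp [map_smul]
  have hBLA : B = L * A := by
    have hLA : L * A = A - Matrix.of (fun i k => (l i) k) * A := by
      rw [hL, Matrix.sub_mul, Matrix.one_mul]
    ext i j
    rw [hLA]
    simp only [Matrix.sub_apply, Matrix.mul_apply, hA, hB, Matrix.of_apply]
    rw [← hsum i (f j), map_sub]
    ring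
  have hdetL : L.det = 1 := by
    have htri : L.BlockTriangular OrderDual.toDual := by
      intro i k h
      simp only [OrderDual.toDual_lt_toDual] at h
      simp [hL, Matrix.one_apply, h.ne, hl0 i k (not_lt_of_gt h)]
    rw [Matrix.det_of_lowerTriangular L htri]
    have : ∀ i : Fin n, L i i = 1 := by
      intro i
      simp [hL, Matrix.one_apply, hl0 i i (lt_irrefl i)]
    simp [this]
  have hdetB : B.det = ∏ i, ‖y i‖ := by
    have htri : B.BlockTriangular id := by
      intro i j h
      simp only [id_eq] at h
      have : g (y j) (y i) = 0 := horth j i h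
      simp [hB, f, hFapp, this]
    rw [Matrix.det_of_upperTriangular htri]
    refine Finset.prod_congr rfl fun i _ => ?_
    have : B i i = ‖y i‖⁻¹ * ‖y i‖ ^ 2 := by
      simp [hB, f, hFapp, hself]
    rw [this, sq]
    rw [← mul_assoc, inv_mul_cancel₀ (hynorm i), one_mul]
  have hdetA : |A.det| = ∏ i, ‖y i‖ := by
    have : A.det = ∏ i, ‖y i‖ := by
      have := hBLA
      have h2 : B.det = L.det * A.det := by rw [this, Matrix.det_mul]
      rw [hdetL, one_mul] at h2
      rw [← h2, hdetB]
    rw [this, abs_of_nonneg (Finset.prod_nonneg fun i _ => norm_nonneg _)]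
  -- membership and boundedness
  have hmem : (∏ i, ‖y i‖) ∈ {r | ∃ f : Fin n → (X →L[ℝ] ℝ), (∀ i, ‖f i‖ ≤ 1) ∧
      r = |Matrix.det (Matrix.of fun i j => f j (x i))|} := ⟨f, hf1, hdetA.symm⟩
  have hbdd : BddAbove {r | ∃ f : Fin n → (X →L[ℝ] ℝ), (∀ i, ‖f i‖ ≤ 1) ∧
      r = |Matrix.det (Matrix.of fun i j => f j (x i))|} := by
    refine ⟨(Nat.factorial n) • (1 + ∑ i, ‖x i‖) ^ n, ?_⟩
    rintro r ⟨φ, hφ, rfl⟩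
    have hent : ∀ i j, AbsoluteValue.abs ((Matrix.of fun i j => φ j (x i)) i j)
        ≤ 1 + ∑ i, ‖x i‖ := by
      intro i j
      have h1 : |φ j (x i)| ≤ ‖φ j‖ * ‖x i‖ := (φ j).le_opNorm (x i)
      have h2 : ‖φ j‖ * ‖x i‖ ≤ 1 * ‖x i‖ :=
        mul_le_mul_of_nonneg_right (hφ j) (norm_nonneg _)
      have h3 : ‖x i‖ ≤ ∑ i, ‖x i‖ :=
        Finset.single_le_sum (fun i _ => norm_nonneg (x i)) (Finset.mem_univ i)
      simp only [AbsoluteValue.abs_apply, Matrix.of_apply]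
      linarith
    have := Matrix.det_le hent
    simpa using this
  exact le_csSup hbdd hmem
end

section
/- Let X be a real normed space of dimension ≥ n satisfying property (G). If f is a multilinear n-functional on X bounded with respect to the Gähler n-norm (|f(x₁,...,xₙ)| ≤ K·‖x₁,...,xₙ‖_G), then f is bounded with respect to the norm of X, with ‖f‖_{n,1} ≤ n!·‖f‖_{n,n}. -/
open scoped BigOperators

/-- `‖f‖_{n,1}`: the smallest constant `K ≥ 0` with `|f(x₁,…,xₙ)| ≤ K ‖x₁‖⋯‖xₙ‖`. -/
noncomputable def norm11 {X : Type*} [NormedAddCommGroup X] [NormedSpace ℝ X] {n : ℕ}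
    (f : MultilinearMap ℝ (fun _ : Fin n => X) ℝ) : ℝ :=
  sInf {K | 0 ≤ K ∧ ∀ x : Fin n → X, |f x| ≤ K * ∏ i, ‖x i‖}

/-- `‖f‖_{n,n}`: the smallest constant `K ≥ 0` with `|f(x₁,…,xₙ)| ≤ K ‖x₁,…,xₙ‖_G`. -/
noncomputable def normnn {X : Type*} [NormedAddCommGroup X] [NormedSpace ℝ X] {n : ℕ}
    (f : MultilinearMap ℝ (fun _ : Fin n => X) ℝ) : ℝ :=
  sInf {K | 0 ≤ K ∧ ∀ x : Fin n → X, |f x| ≤ K * gahler x}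

lemma gahler_le {X : Type*} [NormedAddCommGroup X] [NormedSpace ℝ X] {n : ℕ}
    (x : Fin n → X) : gahler x ≤ (n.factorial : ℝ) * ∏ i, ‖x i‖ := by
  have hb : (0:ℝ) ≤ (n.factorial : ℝ) * ∏ i, ‖x i‖ := by
    positivity
  apply Real.sSup_le _ hb
  rintro r ⟨g, hg, rfl⟩
  have key : ∀ σ : Equiv.Perm (Fin n),
      |(Equiv.Perm.sign σ : ℤ) * ∏ i, (Matrix.of fun i j => g j (x i)) (σ i) i|
        ≤ ∏ i, ‖x i‖ := by
    intro σ
    rw [abs_mul]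
    have : |((Equiv.Perm.sign σ : ℤ) : ℝ)| = 1 := by
      rcases Int.units_eq_one_or (Equiv.Perm.sign σ) with h | h <;> simp [h]
    rw [this, one_mul, Finset.abs_prod]
    calc ∏ i, |(Matrix.of fun i j => g j (x i)) (σ i) i|
        ≤ ∏ i, ‖x (σ i)‖ := by
          apply Finset.prod_le_prod
          · intro i _; exact abs_nonneg _
          · intro i _
            simp only [Matrix.of_apply]
            calc |g i (x (σ i))| ≤ ‖g i‖ * ‖x (σ i)‖ := (g i).le_opNorm _
              _ ≤ 1 * ‖x (σ i)‖ := by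
                  exact mul_le_mul_of_nonneg_right (hg i) (norm_nonneg _)
              _ = ‖x (σ i)‖ := one_mul _
      _ = ∏ i, ‖x i‖ := Equiv.prod_comp σ (fun i => ‖x i‖)
  calc |Matrix.det (Matrix.of fun i j => g j (x i))|
      = |∑ σ : Equiv.Perm (Fin n),
          (Equiv.Perm.sign σ : ℤ) * ∏ i, (Matrix.of fun i j => g j (x i)) (σ i) i| := by
        rw [Matrix.det_apply]
        simp [Units.smul_def, zsmul_eq_mul]
    _ ≤ ∑ σ : Equiv.Perm (Fin n),
          |(Equiv.Perm.sign σ : ℤ) * ∏ i, (Matrix.of fun i j => g j (x i)) (σ i) i| :=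
        Finset.abs_sum_le_sum_abs _ _
    _ ≤ ∑ _σ : Equiv.Perm (Fin n), ∏ i, ‖x i‖ :=
        Finset.sum_le_sum fun σ _ => key σ
    _ = (n.factorial : ℝ) * ∏ i, ‖x i‖ := by
        rw [Finset.sum_const, Finset.card_univ, Fintype.card_perm, nsmul_eq_mul]
        simp

theorem stmt11 {X : Type*} [NormedAddCommGroup X] [NormedSpace ℝ X] (n : ℕ)
    (hdim : (n : Cardinal) ≤ Module.rank ℝ X)
    (τp τm : X → X → ℝ)
    (hτp : ∀ x y : X, Filter.Tendsto (fun t : ℝ => (‖x + t • y‖ - ‖x‖) / t)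
      (nhdsWithin 0 (Set.Ioi 0)) (nhds (τp x y)))
    (hτm : ∀ x y : X, Filter.Tendsto (fun t : ℝ => (‖x + t • y‖ - ‖x‖) / t)
      (nhdsWithin 0 (Set.Iio 0)) (nhds (τm x y)))
    (hG : ∀ x : X, IsLinearMap ℝ (fun y => milicic τp τm x y))
    (f : MultilinearMap ℝ (fun _ : Fin n => X) ℝ)
    (hbdd : ∃ K > 0, ∀ x : Fin n → X, |f x| ≤ K * gahler x) :
    (∃ K' > 0, ∀ x : Fin n → X, |f x| ≤ K' * ∏ i, ‖x i‖) ∧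
      norm11 f ≤ (n.factorial : ℝ) * normnn f := by
  obtain ⟨K, hK, hKb⟩ := hbdd
  have hfact : (0:ℝ) < (n.factorial : ℝ) := by positivity
  -- from a Gähler bound to a norm bound
  have step : ∀ K : ℝ, 0 ≤ K → (∀ x : Fin n → X, |f x| ≤ K * gahler x) →
      ∀ x : Fin n → X, |f x| ≤ (K * n.factorial) * ∏ i, ‖x i‖ := by
    intro K hK0 hb x
    calc |f x| ≤ K * gahler x := hb x
      _ ≤ K * ((n.factorial : ℝ) * ∏ i, ‖x i‖) :=
          mul_le_mul_of_nonneg_left (gahler_le x) hK0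
      _ = (K * n.factorial) * ∏ i, ‖x i‖ := by ring
  constructor
  · exact ⟨K * n.factorial, by positivity, step K hK.le hKb⟩
  · rw [norm11, normnn]
    have hne : {K | 0 ≤ K ∧ ∀ x : Fin n → X, |f x| ≤ K * gahler x}.Nonempty :=
      ⟨K, hK.le, hKb⟩
    rw [show (n.factorial : ℝ) * sInf {K | 0 ≤ K ∧ ∀ x : Fin n → X, |f x| ≤ K * gahler x}
        = sInf {K | 0 ≤ K ∧ ∀ x : Fin n → X, |f x| ≤ K * gahler x} * (n.factorial : ℝ)
        from mul_comm _ _]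
    rw [← div_le_iff₀ hfact]
    apply le_csInf hne
    rintro C ⟨hC0, hCb⟩
    rw [div_le_iff₀ hfact]
    apply csInf_le
    · exact ⟨0, fun K hK => hK.1⟩
    · exact ⟨by positivity, step C hC0 hCb⟩
end

section
/- Every multilinear n-functional f on a real normed space X of dimension ≥ n that is bounded with respect to an n-norm ‖·,...,·‖ on X is antisymmetric: f(x₁,...,xₙ) = sgn(σ)·f(x_{σ(1)},...,x_{σ(n)}) for all xᵢ ∈ X and every permutation σ of {1,...,n}. -/
/-- Every multilinear `n`-functional bounded with respect to an `n`-norm `N` on a real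
normed space `X` of dimension `≥ n` is antisymmetric. -/
theorem stmt12 {X : Type*} [NormedAddCommGroup X] [NormedSpace ℝ X] (n : ℕ)
    (hdim : (n : Cardinal) ≤ Module.rank ℝ X)
    (N : (Fin n → X) → ℝ)
    -- `N` vanishes exactly on linearly dependent tuples
    (hzero : ∀ x : Fin n → X, N x = 0 ↔ ¬ LinearIndependent ℝ x)
    -- invariance under permutations
    (hperm : ∀ (x : Fin n → X) (σ : Equiv.Perm (Fin n)), N (x ∘ σ) = N x)
    -- absolute homogeneity in each variable
    (hhom : ∀ (x : Fin n → X) (i : Fin n) (a : ℝ) (v : X),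
      N (Function.update x i (a • v)) = |a| * N (Function.update x i v))
    -- triangle inequality in each variable
    (htri : ∀ (x : Fin n → X) (i : Fin n) (u v : X),
      N (Function.update x i (u + v)) ≤ N (Function.update x i u) + N (Function.update x i v))
    (f : MultilinearMap ℝ (fun _ : Fin n => X) ℝ)
    (hbdd : ∃ K > 0, ∀ x : Fin n → X, |f x| ≤ K * N x) :
    ∀ (σ : Equiv.Perm (Fin n)) (x : Fin n → X),
      f x = (Equiv.Perm.sign σ : ℤ) * f (x ∘ σ) := by
  obtain ⟨K, hK, hb⟩ := hbdd
  have hvanish : ∀ (x : Fin n → X) (i j : Fin n), x i = x j → i ≠ j → f x = 0 := by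
    intro x i j hij hne
    have hdep : ¬ LinearIndependent ℝ x := fun h => hne (h.injective (by simp [hij]))
    have hN : N x = 0 := (hzero x).2 hdep
    have := hb x
    rw [hN, mul_zero] at this
    exact abs_eq_zero.1 (le_antisymm this (abs_nonneg _))
  let g : X [⋀^Fin n]→ₗ[ℝ] ℝ := ⟨f, hvanish⟩
  intro σ x
  have h := g.map_perm x σ
  have hg : ∀ y : Fin n → X, g y = f y := fun _ => rfl
  rw [hg, hg] at h
  rw [h]
  rcases Int.units_eq_one_or (Equiv.Perm.sign σ) with h1 | h1 <;> simp [h1]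
end

section
/- Let X be a real normed space of dimension ≥ n satisfying property (G). On the space B_as(X, X^{(n−1)}) of antisymmetric bounded linear operators from X into X^{(n−1)}, the function ‖u‖_G := sup over tuples with ‖x₁,...,xₙ‖_G ≠ 0 of |(u(xₙ))(x₁,...,x_{n−1})|/‖x₁,...,xₙ‖_G defines a norm, and this norm is equivalent to the operator norm: ‖u‖_G ≤ ‖u‖_op ≤ n!·‖u‖_G for all u. -/
/-- `u ∈ B(X, X^{(n)})` is antisymmetric (as an `(n+1)`-functional). -/
def IsAntisym {X : Type*} [NormedAddCommGroup X] [NormedSpace ℝ X] {n : ℕ}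
    (u : X →L[ℝ] ContinuousMultilinearMap ℝ (fun _ : Fin n => X) ℝ) : Prop :=
  ∀ (x : Fin (n + 1) → X) (σ : Equiv.Perm (Fin (n + 1))),
    u (x (Fin.last n)) (fun i => x i.castSucc) =
      (Equiv.Perm.sign σ : ℤ) * u (x (σ (Fin.last n))) (fun i => x (σ i.castSucc))

/-- `‖u‖_G`, the supremum of `|(u xₙ)(x₁,…,x_{n-1})| / ‖x₁,…,xₙ‖_G` over tuples with
nonzero Gähler norm. -/
noncomputable def opnormG {X : Type*} [NormedAddCommGroup X] [NormedSpace ℝ X] {n : ℕ}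
    (u : X →L[ℝ] ContinuousMultilinearMap ℝ (fun _ : Fin n => X) ℝ) : ℝ :=
  sSup {r | ∃ x : Fin (n + 1) → X, gahler x ≠ 0 ∧
    r = |u (x (Fin.last n)) (fun i => x i.castSucc)| / gahler x}

open Filter Topology Pointwise

/-!
By property (G), `g x := g(x, ·)` is a functional of norm at most `‖x‖` with `g x x = ‖x‖²`.
A Gram–Schmidt process for `g` turns any tuple `x` into a tuple `y` with `g (y j) (y i) = 0`
for `i < j` on which every alternating map takes the same value as on `x`. The functionals
`g (y j) / ‖y j‖` give a triangular matrix with diagonal `‖y i‖`, so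
`∏ ‖y i‖ ≤ ‖y‖_G = ‖x‖_G`, whence `|u x| = |u y| ≤ ‖u‖ ∏ ‖y i‖ ≤ ‖u‖ ‖x‖_G` and
`‖u‖_G ≤ ‖u‖`. Expanding the determinants gives `‖x‖_G ≤ (n+1)! ∏ ‖x i‖`, hence
`‖u‖ ≤ (n+1)! ‖u‖_G`. The norm axioms follow from these two bounds.
-/

section

variable {X : Type*} [NormedAddCommGroup X] [NormedSpace ℝ X]

section Gahler

theorem abs_det_le_factorial_mul_prod_norm {m : ℕ} (f : Fin m → X →L[ℝ] ℝ)
    (hf : ∀ j, ‖f j‖ ≤ 1) (x : Fin m → X) :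
    |(Matrix.of fun i j => f j (x i)).det| ≤ m.factorial * ∏ i, ‖x i‖ := by
  have hterm (σ : Equiv.Perm (Fin m)) : ∏ i, |f i (x (σ i))| ≤ ∏ i, ‖x i‖ := by
    rw [← Equiv.prod_comp σ fun i => ‖x i‖]
    gcongr with i
    exact (f i).le_of_opNorm_le (hf i) _ |>.trans_eq (one_mul _)
  calc |(Matrix.of fun i j => f j (x i)).det|
      ≤ ∑ σ : Equiv.Perm (Fin m), ∏ i, |f i (x (σ i))| := by
        rw [Matrix.det_apply]
        refine (Finset.abs_sum_le_sum_abs _ _).trans_eq (Finset.sum_congr rfl fun σ _ => ?_)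
        rcases Int.units_eq_one_or (Equiv.Perm.sign σ) with h | h <;> simp [h, Finset.abs_prod]
    _ ≤ ∑ _σ : Equiv.Perm (Fin m), ∏ i, ‖x i‖ := Finset.sum_le_sum fun σ _ => hterm σ
    _ = m.factorial * ∏ i, ‖x i‖ := by simp [Fintype.card_perm]

theorem gahler_nonneg {m : ℕ} (x : Fin m → X) : 0 ≤ gahler x :=
  Real.sSup_nonneg <| by rintro _ ⟨f, -, rfl⟩; exact abs_nonneg _

theorem gahler_le_factorial_mul_prod_norm {m : ℕ} (x : Fin m → X) :
    gahler x ≤ m.factorial * ∏ i, ‖x i‖ :=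
  Real.sSup_le (by rintro _ ⟨f, hf, rfl⟩; exact abs_det_le_factorial_mul_prod_norm f hf x)
    (by positivity)

theorem abs_det_le_gahler {m : ℕ} (f : Fin m → X →L[ℝ] ℝ) (hf : ∀ j, ‖f j‖ ≤ 1)
    (x : Fin m → X) : |(Matrix.of fun i j => f j (x i)).det| ≤ gahler x :=
  le_csSup ⟨_, by rintro _ ⟨f, hf, rfl⟩; exact abs_det_le_factorial_mul_prod_norm f hf x⟩
    ⟨f, hf, rfl⟩

theorem gahler_eq_of_forall_alternatingMap_eq {m : ℕ} {x y : Fin m → X}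
    (h : ∀ F : X [⋀^Fin m]→ₗ[ℝ] ℝ, F y = F x) : gahler y = gahler x := by
  have hdet (f : Fin m → X →L[ℝ] ℝ) :
      (Matrix.of fun i j => f j (y i)).det = (Matrix.of fun i j => f j (x i)).det :=
    h (Matrix.detRowAlternating.compLinearMap (LinearMap.pi fun j => (f j : X →ₗ[ℝ] ℝ)))
  simp only [gahler, hdet]

end Gahler

section Triangular

variable (g : X → X →L[ℝ] ℝ)

theorem exists_mem_span_apply_sub_eq_zero (hg_self : ∀ x, g x x = ‖x‖ ^ 2)
    (hg_norm : ∀ x, ‖g x‖ ≤ ‖x‖) {m : ℕ} (w : Fin m → X)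
    (hw : ∀ i j, i < j → g (w j) (w i) = 0) (t : X) :
    ∃ v ∈ Submodule.span ℝ (Set.range w), ∀ i, g (w i) (t - v) = 0 := by
  induction m generalizing t with
  | zero => exact ⟨0, zero_mem _, fun i => i.elim0⟩
  | succ m ih =>
    obtain ⟨v, hv, hvg⟩ := ih (Fin.tail w)
      (fun i j hij => hw _ _ (Fin.succ_lt_succ_iff.mpr hij)) t
    set c := g (w 0) (t - v) / ‖w 0‖ ^ 2
    have hc : g (w 0) (t - v) - c * g (w 0) (w 0) = 0 := by
      rcases eq_or_ne (w 0) 0 with h0 | h0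
      · have : g (w 0) = 0 := norm_le_zero_iff.mp ((hg_norm _).trans_eq (by simp [h0]))
        simp [this]
      · rw [hg_self, div_mul_cancel₀ _ (by positivity), sub_self]
    refine ⟨v + c • w 0, add_mem (Submodule.span_mono (Set.range_comp_subset_range _ _) hv)
      (Submodule.smul_mem _ _ (Submodule.subset_span ⟨0, rfl⟩)), fun i => ?_⟩
    rw [sub_add_eq_sub_sub, map_sub, map_smul, smul_eq_mul]
    cases i using Fin.cases with
    | zero => exact hc
    | succ i => rw [hw 0 i.succ i.succ_pos, mul_zero, sub_zero]; exact hvg i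

theorem exists_triangular_forall_alternatingMap_eq (hg_self : ∀ x, g x x = ‖x‖ ^ 2)
    (hg_norm : ∀ x, ‖g x‖ ≤ ‖x‖) {N : Type*} [AddCommGroup N] [Module ℝ N] {m : ℕ}
    (x : Fin m → X) :
    ∃ y : Fin m → X, (∀ i j, i < j → g (y j) (y i) = 0) ∧
      ∀ F : X [⋀^Fin m]→ₗ[ℝ] N, F y = F x := by
  induction m with
  | zero => exact ⟨x, fun i => i.elim0, fun _ => rfl⟩
  | succ m ih =>
    obtain ⟨y, hy, hyF⟩ := ih (Fin.tail x)
    obtain ⟨v, hv, hvg⟩ := exists_mem_span_apply_sub_eq_zero g hg_self hg_norm y hy (x 0)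
    refine ⟨Fin.cons (x 0 - v) y, fun i j hij => ?_, fun F => ?_⟩
    · cases j using Fin.cases with
      | zero => exact absurd hij (Fin.not_lt_zero i)
      | succ j =>
        cases i using Fin.cases with
        | zero => simpa using hvg j
        | succ i => simpa using hy i j (Fin.succ_lt_succ_iff.mp hij)
    · have hv0 : F (Fin.cons v y) = 0 :=
        F.map_linearDependent _ fun h => (linearIndependent_finCons.mp h).2 hv
      calc F (Fin.cons (x 0 - v) y) = F.curryLeft (x 0) y - F.curryLeft v y := by
            rw [← AlternatingMap.sub_apply, ← map_sub]; rfl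
        _ = F.curryLeft (x 0) (Fin.tail x) := by
            rw [show F.curryLeft v y = 0 from hv0, sub_zero, hyF]
        _ = F x := congrArg F (Fin.cons_self_tail x)

theorem prod_norm_le_gahler_of_triangular (hg_self : ∀ x, g x x = ‖x‖ ^ 2)
    (hg_norm : ∀ x, ‖g x‖ ≤ ‖x‖) {m : ℕ} {y : Fin m → X}
    (hy : ∀ i j, i < j → g (y j) (y i) = 0) : ∏ i, ‖y i‖ ≤ gahler y := by
  set f : Fin m → X →L[ℝ] ℝ := fun j => ‖y j‖⁻¹ • g (y j)
  have hf : ∀ j, ‖f j‖ ≤ 1 := fun j => by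
    rw [norm_smul, norm_inv, norm_norm]
    exact (mul_le_mul_of_nonneg_left (hg_norm _) (by positivity)).trans
      (inv_mul_le_one_of_le₀ le_rfl (norm_nonneg _))
  have hdiag : ∀ i, f i (y i) = ‖y i‖ := fun i => by
    rcases eq_or_ne ‖y i‖ 0 with h | h
    · simp [f, h]
    · simp only [f, smul_apply, hg_self, smul_eq_mul]
      field_simp
  have hdet : (Matrix.of fun i j => f j (y i)).det = ∏ i, ‖y i‖ := by
    rw [Matrix.det_of_isLowerTriangular _ fun i j hij => by simp [f, hy i j hij]]
    exact Finset.prod_congr rfl fun i _ => hdiag i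
  calc ∏ i, ‖y i‖ ≤ |(Matrix.of fun i j => f j (y i)).det| := hdet ▸ le_abs_self _
    _ ≤ gahler y := abs_det_le_gahler f hf y

theorem AlternatingMap.abs_apply_le_mul_gahler (hg_self : ∀ x, g x x = ‖x‖ ^ 2)
    (hg_norm : ∀ x, ‖g x‖ ≤ ‖x‖) {m : ℕ} (A : X [⋀^Fin m]→ₗ[ℝ] ℝ) {C : ℝ} (hC : 0 ≤ C)
    (hA : ∀ x, |A x| ≤ C * ∏ i, ‖x i‖) (x : Fin m → X) : |A x| ≤ C * gahler x := by
  obtain ⟨y, hy, hyF⟩ := exists_triangular_forall_alternatingMap_eq g hg_self hg_norm (N := ℝ) x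
  calc |A x| = |A y| := by rw [hyF]
    _ ≤ C * ∏ i, ‖y i‖ := hA y
    _ ≤ C * gahler y := by gcongr; exact prod_norm_le_gahler_of_triangular g hg_self hg_norm hy
    _ = C * gahler x := by rw [gahler_eq_of_forall_alternatingMap_eq hyF]

end Triangular

section Milicic

theorem abs_norm_add_smul_sub_norm_div_le (x y : X) (t : ℝ) :
    |(‖x + t • y‖ - ‖x‖) / t| ≤ ‖y‖ := by
  rw [abs_div]
  refine div_le_of_le_mul₀ (abs_nonneg t) (norm_nonneg y) ?_
  calc |‖x + t • y‖ - ‖x‖| ≤ ‖x + t • y - x‖ := abs_norm_sub_norm_le _ _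
    _ = ‖y‖ * |t| := by rw [add_sub_cancel_left, norm_smul, Real.norm_eq_abs, mul_comm]

theorem norm_add_smul_self_sub_norm_div_eventuallyEq (x : X) :
    (fun t : ℝ => (‖x + t • x‖ - ‖x‖) / t) =ᶠ[𝓝[≠] 0] fun _ => ‖x‖ := by
  filter_upwards [self_mem_nhdsWithin, nhdsWithin_le_nhds (Ioi_mem_nhds neg_one_lt_zero)]
    with t (ht : t ≠ 0) (ht' : -1 < t)
  rw [show x + t • x = (1 + t) • x by rw [add_smul, one_smul], norm_smul,
    Real.norm_of_nonneg (by linarith)]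
  field_simp
  ring

variable {τp τm : X → X → ℝ}

theorem milicic_self (x : X)
    (hp : Tendsto (fun t : ℝ => (‖x + t • x‖ - ‖x‖) / t) (𝓝[>] 0) (𝓝 (τp x x)))
    (hm : Tendsto (fun t : ℝ => (‖x + t • x‖ - ‖x‖) / t) (𝓝[<] 0) (𝓝 (τm x x))) :
    milicic τp τm x x = ‖x‖ ^ 2 := by
  have hx := norm_add_smul_self_sub_norm_div_eventuallyEq x
  have hp' : τp x x = ‖x‖ := tendsto_nhds_unique hp <| tendsto_const_nhds.congr'
    (hx.filter_mono (nhdsWithin_mono _ fun t (ht : 0 < t) => ht.ne')).symm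
  have hm' : τm x x = ‖x‖ := tendsto_nhds_unique hm <| tendsto_const_nhds.congr'
    (hx.filter_mono (nhdsWithin_mono _ fun t (ht : t < 0) => ht.ne)).symm
  rw [milicic, hp', hm']
  ring

theorem abs_milicic_le (x y : X)
    (hp : Tendsto (fun t : ℝ => (‖x + t • y‖ - ‖x‖) / t) (𝓝[>] 0) (𝓝 (τp x y)))
    (hm : Tendsto (fun t : ℝ => (‖x + t • y‖ - ‖x‖) / t) (𝓝[<] 0) (𝓝 (τm x y))) :
    |milicic τp τm x y| ≤ ‖x‖ * ‖y‖ := by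
  have hp' := le_of_tendsto' hp.abs fun t => abs_norm_add_smul_sub_norm_div_le x y t
  have hm' := le_of_tendsto' hm.abs fun t => abs_norm_add_smul_sub_norm_div_le x y t
  rw [milicic, abs_mul, abs_of_nonneg (by positivity)]
  nlinarith [abs_add_le (τm x y) (τp x y), norm_nonneg x]

noncomputable def milicicCLM (hG : ∀ x : X, IsLinearMap ℝ (fun y => milicic τp τm x y))
    (hbound : ∀ x y : X, |milicic τp τm x y| ≤ ‖x‖ * ‖y‖) (x : X) : X →L[ℝ] ℝ :=
  (IsLinearMap.mk' _ (hG x)).mkContinuous ‖x‖ (hbound x)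

end Milicic

section Operator

variable {n : ℕ} {u v : X →L[ℝ] ContinuousMultilinearMap ℝ (fun _ : Fin n => X) ℝ}

theorem abs_apply_le_opNorm_mul_prod_norm (x : Fin (n + 1) → X) :
    |u (x (Fin.last n)) (fun i => x i.castSucc)| ≤ ‖u‖ * ∏ i, ‖x i‖ := by
  rw [Fin.prod_univ_castSucc, mul_comm (∏ i : Fin n, _), ← mul_assoc, ← Real.norm_eq_abs]
  exact (u _).le_of_opNorm_le (u.le_opNorm _) _

def IsBoundedByGahler (u : X →L[ℝ] ContinuousMultilinearMap ℝ (fun _ : Fin n => X) ℝ) : Prop :=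
  ∀ x : Fin (n + 1) → X, |u (x (Fin.last n)) (fun i => x i.castSucc)| ≤ ‖u‖ * gahler x

noncomputable def IsAntisym.toAlternatingMap (hu : IsAntisym u) : X [⋀^Fin (n + 1)]→ₗ[ℝ] ℝ where
  toMultilinearMap := u.flipMultilinear.uncurryRight.toMultilinearMap
  map_eq_zero_of_eq' x i j hx hij := by
    have hswap : x ∘ Equiv.swap i j = x := by
      rw [Equiv.comp_swap_eq_update, hx, Function.update_eq_self, ← hx, Function.update_eq_self]
    have h := hu x (Equiv.swap i j)
    simp only [← Function.comp_apply (f := x) (g := Equiv.swap i j), hswap,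
      Equiv.Perm.sign_swap hij] at h
    change u (x (Fin.last n)) (fun k => x k.castSucc) = 0
    push_cast at h
    linarith

theorem IsAntisym.isBoundedByGahler (hu : IsAntisym u) (g : X → X →L[ℝ] ℝ)
    (hg_self : ∀ x, g x x = ‖x‖ ^ 2) (hg_norm : ∀ x, ‖g x‖ ≤ ‖x‖) : IsBoundedByGahler u :=
  hu.toAlternatingMap.abs_apply_le_mul_gahler g hg_self hg_norm (norm_nonneg u)
    abs_apply_le_opNorm_mul_prod_norm

theorem opnormG_nonneg (u : X →L[ℝ] ContinuousMultilinearMap ℝ (fun _ : Fin n => X) ℝ) :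
    0 ≤ opnormG u :=
  Real.sSup_nonneg <| by rintro _ ⟨x, -, rfl⟩; exact div_nonneg (abs_nonneg _) (gahler_nonneg x)

theorem opnormG_smul (a : ℝ) (u : X →L[ℝ] ContinuousMultilinearMap ℝ (fun _ : Fin n => X) ℝ) :
    opnormG (a • u) = |a| * opnormG u := by
  have hset : {r | ∃ x : Fin (n + 1) → X, gahler x ≠ 0 ∧
      r = |(a • u) (x (Fin.last n)) (fun i => x i.castSucc)| / gahler x} =
      |a| • {r | ∃ x : Fin (n + 1) → X, gahler x ≠ 0 ∧
        r = |u (x (Fin.last n)) (fun i => x i.castSucc)| / gahler x} := by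
    ext r
    simp only [Set.mem_smul_set, Set.mem_ofPred_eq, smul_eq_mul]
    constructor
    · rintro ⟨x, hx, rfl⟩
      exact ⟨_, ⟨x, hx, rfl⟩, by simp [abs_mul, mul_div_assoc]⟩
    · rintro ⟨_, ⟨x, hx, rfl⟩, rfl⟩
      exact ⟨x, hx, by simp [abs_mul, mul_div_assoc]⟩
  rw [opnormG, opnormG, hset, Real.sSup_smul_of_nonneg (abs_nonneg a), smul_eq_mul]

theorem opnormG_zero :
    opnormG (0 : X →L[ℝ] ContinuousMultilinearMap ℝ (fun _ : Fin n => X) ℝ) = 0 := by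
  refine le_antisymm (Real.sSup_le ?_ le_rfl) (opnormG_nonneg 0)
  rintro _ ⟨x, -, rfl⟩
  simp

theorem IsBoundedByGahler.opNorm_mem_upperBounds (hu : IsBoundedByGahler u) :
    ‖u‖ ∈ upperBounds {r | ∃ x : Fin (n + 1) → X, gahler x ≠ 0 ∧
      r = |u (x (Fin.last n)) (fun i => x i.castSucc)| / gahler x} := by
  rintro _ ⟨x, -, rfl⟩
  exact div_le_of_le_mul₀ (gahler_nonneg x) (norm_nonneg u) (hu x)

theorem IsBoundedByGahler.opnormG_le_opNorm (hu : IsBoundedByGahler u) :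
    opnormG u ≤ ‖u‖ :=
  Real.sSup_le hu.opNorm_mem_upperBounds (norm_nonneg u)

theorem IsBoundedByGahler.abs_apply_le_opnormG_mul_gahler (hu : IsBoundedByGahler u)
    (x : Fin (n + 1) → X) :
    |u (x (Fin.last n)) (fun i => x i.castSucc)| ≤ opnormG u * gahler x := by
  rcases eq_or_ne (gahler x) 0 with hx | hx
  · simpa [hx] using hu x
  · rw [← div_le_iff₀ ((gahler_nonneg x).lt_of_ne' hx)]
    exact le_csSup ⟨_, hu.opNorm_mem_upperBounds⟩ ⟨x, hx, rfl⟩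

theorem IsBoundedByGahler.opnormG_add_le (hu : IsBoundedByGahler u)
    (hv : IsBoundedByGahler v) :
    opnormG (u + v) ≤ opnormG u + opnormG v := by
  refine Real.sSup_le ?_ (add_nonneg (opnormG_nonneg u) (opnormG_nonneg v))
  rintro _ ⟨x, -, rfl⟩
  refine div_le_of_le_mul₀ (gahler_nonneg x) (add_nonneg (opnormG_nonneg u) (opnormG_nonneg v)) ?_
  calc |(u + v) (x (Fin.last n)) (fun i => x i.castSucc)|
      ≤ |u (x (Fin.last n)) (fun i => x i.castSucc)| +
        |v (x (Fin.last n)) (fun i => x i.castSucc)| := abs_add_le _ _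
    _ ≤ opnormG u * gahler x + opnormG v * gahler x :=
        add_le_add (hu.abs_apply_le_opnormG_mul_gahler x) (hv.abs_apply_le_opnormG_mul_gahler x)
    _ = (opnormG u + opnormG v) * gahler x := (add_mul _ _ _).symm

theorem IsBoundedByGahler.opNorm_le_factorial_mul_opnormG (hu : IsBoundedByGahler u) :
    ‖u‖ ≤ (n + 1).factorial * opnormG u := by
  have hC : 0 ≤ ((n + 1).factorial : ℝ) * opnormG u :=
    mul_nonneg (by positivity) (opnormG_nonneg u)
  refine u.opNorm_le_bound hC fun z => ContinuousMultilinearMap.opNorm_le_bound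
    (by positivity) fun m => ?_
  have h := (hu.abs_apply_le_opnormG_mul_gahler (Fin.snoc m z)).trans
    (mul_le_mul_of_nonneg_left (gahler_le_factorial_mul_prod_norm _) (opnormG_nonneg u))
  simp only [Fin.snoc_last, Fin.snoc_castSucc, Fin.prod_univ_castSucc] at h
  rw [Real.norm_eq_abs]
  linarith

end Operator

end

theorem stmt15_general {X : Type*} [NormedAddCommGroup X] [NormedSpace ℝ X] (n : ℕ)
    (τp τm : X → X → ℝ)
    (hτp : ∀ x y : X, Filter.Tendsto (fun t : ℝ => (‖x + t • y‖ - ‖x‖) / t)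
      (nhdsWithin 0 (Set.Ioi 0)) (nhds (τp x y)))
    (hτm : ∀ x y : X, Filter.Tendsto (fun t : ℝ => (‖x + t • y‖ - ‖x‖) / t)
      (nhdsWithin 0 (Set.Iio 0)) (nhds (τm x y)))
    (hG : ∀ x : X, IsLinearMap ℝ (fun y => milicic τp τm x y)) :
    ∀ u v : X →L[ℝ] ContinuousMultilinearMap ℝ (fun _ : Fin n => X) ℝ,
      IsAntisym u → IsAntisym v → ∀ a : ℝ,
        0 ≤ opnormG u ∧
        (opnormG u = 0 ↔ u = 0) ∧
        opnormG (a • u) = |a| * opnormG u ∧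
        opnormG (u + v) ≤ opnormG u + opnormG v ∧
        opnormG u ≤ ‖u‖ ∧ ‖u‖ ≤ ((n + 1).factorial : ℝ) * opnormG u := by
  intro u v hu hv a
  set g := milicicCLM hG fun x y => abs_milicic_le x y (hτp x y) (hτm x y)
  have hg_self (x : X) : g x x = ‖x‖ ^ 2 := milicic_self x (hτp x x) (hτm x x)
  have hg_norm (x : X) : ‖g x‖ ≤ ‖x‖ := LinearMap.mkContinuous_norm_le _ (norm_nonneg x) _
  have hbu := hu.isBoundedByGahler g hg_self hg_norm
  have hbv := hv.isBoundedByGahler g hg_self hg_norm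
  refine ⟨opnormG_nonneg u, ⟨fun h => ?_, fun h => h ▸ opnormG_zero⟩, opnormG_smul a u,
    hbu.opnormG_add_le hbv, hbu.opnormG_le_opNorm, hbu.opNorm_le_factorial_mul_opnormG⟩
  have hle := hbu.opNorm_le_factorial_mul_opnormG
  rw [h, mul_zero] at hle
  exact u.opNorm_zero_iff.mp (le_antisymm hle (norm_nonneg u))

/-- On `B_as(X, X^{(n-1)})`, `‖·‖_G` is a norm equivalent to the operator norm, with
`‖u‖_G ≤ ‖u‖_op ≤ n! ‖u‖_G` (here the functionals have `n+1` arguments). -/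
theorem stmt15 {X : Type*} [NormedAddCommGroup X] [NormedSpace ℝ X] (n : ℕ)
    (hdim : ((n + 1 : ℕ) : Cardinal) ≤ Module.rank ℝ X)
    (τp τm : X → X → ℝ)
    (hτp : ∀ x y : X, Filter.Tendsto (fun t : ℝ => (‖x + t • y‖ - ‖x‖) / t)
      (nhdsWithin 0 (Set.Ioi 0)) (nhds (τp x y)))
    (hτm : ∀ x y : X, Filter.Tendsto (fun t : ℝ => (‖x + t • y‖ - ‖x‖) / t)
      (nhdsWithin 0 (Set.Iio 0)) (nhds (τm x y)))
    (hG : ∀ x : X, IsLinearMap ℝ (fun y => milicic τp τm x y)) :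
    ∀ u v : X →L[ℝ] ContinuousMultilinearMap ℝ (fun _ : Fin n => X) ℝ,
      IsAntisym u → IsAntisym v → ∀ a : ℝ,
        0 ≤ opnormG u ∧
        (opnormG u = 0 ↔ u = 0) ∧
        opnormG (a • u) = |a| * opnormG u ∧
        opnormG (u + v) ≤ opnormG u + opnormG v ∧
        opnormG u ≤ ‖u‖ ∧ ‖u‖ ≤ ((n + 1).factorial : ℝ) * opnormG u :=
  stmt15_general n τp τm hτp hτm hG
end

section
/- For 1 ≤ p < ∞, the function ‖x₁,...,xₙ‖_p := ((1/n!)·Σ_{j₁}⋯Σ_{jₙ} |det(x_{i,j_k})|^p)^{1/p} on (ℓ^p)ⁿ, where x_{i,j} denotes the j-th coordinate of xᵢ and the determinant is of the n×n matrix whose (i,k) entry is x_{i,j_k}, satisfies the triangle inequality in the first variable: ‖x₁ + x', x₂,...,xₙ‖_p ≤ ‖x₁,...,xₙ‖_p + ‖x', x₂,...,xₙ‖_p. -/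
/-!
For fixed rows `x₂, …, xₙ`, the family of minors `j ↦ det[x_{i,j_k}]`, indexed by `j ∈ ℕⁿ`, depends
linearly on `x₁` and lies in `ℓ^p(ℕⁿ)`: each term of its Leibniz expansion is a product of `ℓ^p`
sequences in separate variables. Since `‖x₁, …, xₙ‖_p` is `(n!)^{-1/p}` times the `ℓ^p` norm of
this family, the triangle inequality in `x₁` is Minkowski's inequality in `ℓ^p(ℕⁿ)`.
-/

open scoped BigOperators

/-- The `n`-norm `‖x₁,…,xₙ‖_p = ((1/n!) Σ_{j₁,…,jₙ} |det[x_{i,j_k}]|^p)^{1/p}` on `ℓ^p`. -/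
noncomputable def lpNNorm (p : ℝ) {n : ℕ}
    (x : Fin n → lp (fun _ : ℕ => ℝ) (ENNReal.ofReal p)) : ℝ :=
  ((1 / (n.factorial : ℝ)) * ∑' j : Fin n → ℕ,
    |Matrix.det (Matrix.of fun i k => (x i : ∀ _ : ℕ, ℝ) (j k))| ^ p) ^ (1 / p)

open Function

variable {α : Type*}

theorem summable_fin_prod_apply_of_nonneg {m : ℕ} {g : Fin m → α → ℝ}
    (hg0 : ∀ i a, 0 ≤ g i a) (hg : ∀ i, Summable (g i)) :
    Summable fun j : Fin m → α => ∏ i, g i (j i) := by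
  induction m with
  | zero => exact .of_finite
  | succ m ih =>
    have htail : Summable fun j : Fin m → α => ∏ i : Fin m, g i.succ (j i) :=
      ih (fun i => hg0 i.succ) (fun i => hg i.succ)
    have hpair := Summable.mul_of_nonneg (hg 0) htail (fun a => hg0 0 a) fun j =>
      Finset.prod_nonneg fun i _ => hg0 i.succ (j i)
    rw [← (Fin.consEquiv fun _ : Fin (m + 1) => α).summable_iff]
    refine hpair.congr fun x => ?_
    simp only [Fin.prod_univ_succ, comp_apply, Fin.consEquiv_apply, Fin.cons_zero, Fin.cons_succ]

section

variable {p : ENNReal}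

theorem Memℓp.fin_prod_apply {m : ℕ} {f : Fin m → α → ℝ} (hp : 0 < p.toReal)
    (hf : ∀ i, Memℓp (f i) p) : Memℓp (fun j : Fin m → α => ∏ i, f i (j i)) p := by
  refine memℓp_gen ?_
  have hsum := summable_fin_prod_apply_of_nonneg
    (g := fun i a => ‖f i a‖ ^ p.toReal) (fun _ _ => by positivity) fun i => (hf i).summable hp
  refine hsum.congr fun j => ?_
  rw [norm_prod, Real.finsetProd_rpow _ _ fun i _ => norm_nonneg _]

theorem Memℓp.det_of_rows {n : ℕ} {y : Fin n → α → ℝ} (hp : 0 < p.toReal)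
    (hy : ∀ i, Memℓp (y i) p) :
    Memℓp (fun j : Fin n → α => (Matrix.of fun i k => y i (j k)).det) p := by
  simp only [Matrix.det_apply, Matrix.of_apply, Units.smul_def, zsmul_eq_mul]
  exact Memℓp.finsetSum _ fun σ _ =>
    (Memℓp.fin_prod_apply hp fun i => hy (σ i)).const_mul _

theorem Matrix.det_of_update_add {R : Type*} [CommRing R] {n : ℕ} (y : Fin n → α → R)
    (i₀ : Fin n) (u v : α → R) (j : Fin n → α) :
    (Matrix.of fun i k => update y i₀ (u + v) i (j k)).det =
      (Matrix.of fun i k => update y i₀ u i (j k)).det +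
        (Matrix.of fun i k => update y i₀ v i (j k)).det := by
  have hrow : ∀ w : α → R, (Matrix.of fun i k => update y i₀ w i (j k)) =
      (Matrix.of fun i k => y i (j k)).updateRow i₀ (w ∘ j) := by
    intro w
    ext i k
    by_cases h : i = i₀ <;> simp [h, Matrix.updateRow_apply]
  simp only [hrow, Pi.add_comp, Matrix.det_updateRow_add]

namespace lp

/-- Indexed by ordered column tuples, so each `n × n` minor occurs `n!` times up to sign. -/
noncomputable def detMinors (hp : 0 < p.toReal) {n : ℕ} (y : Fin n → lp (fun _ : α => ℝ) p) :
    lp (fun _ : Fin n → α => ℝ) p :=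
  ⟨_, Memℓp.det_of_rows hp fun i => lp.memℓp (y i)⟩

theorem detMinors_update_add (hp : 0 < p.toReal) {n : ℕ} (y : Fin n → lp (fun _ : α => ℝ) p)
    (i₀ : Fin n) (u v : lp (fun _ : α => ℝ) p) :
    detMinors hp (update y i₀ (u + v)) =
      detMinors hp (update y i₀ u) + detMinors hp (update y i₀ v) := by
  ext j
  have hcoe : ∀ (w : lp (fun _ : α => ℝ) p) i a,
      (update y i₀ w i : α → ℝ) a = update (fun i => ⇑(y i)) i₀ ⇑w i a := by
    intro w i a
    rw [apply_update (fun _ => (⇑)) y i₀ w]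
  simp only [detMinors, lp.coeFn_add, Pi.add_apply, hcoe]
  exact Matrix.det_of_update_add _ i₀ _ _ j

end lp

end

theorem lpNNorm_eq_mul_norm_detMinors {p : ℝ} (hp : 0 < p) {n : ℕ}
    (y : Fin n → lp (fun _ : ℕ => ℝ) (ENNReal.ofReal p)) :
    lpNNorm p y = (1 / (n.factorial : ℝ)) ^ (1 / p) *
      ‖lp.detMinors (by rwa [ENNReal.toReal_ofReal hp.le]) y‖ := by
  rw [lpNNorm, lp.norm_eq_tsum_rpow (by rwa [ENNReal.toReal_ofReal hp.le])]
  simp only [ENNReal.toReal_ofReal hp.le]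
  rw [Real.mul_rpow (by positivity) (tsum_nonneg fun _ => by positivity)]
  rfl

theorem lpNNorm_update_add_le {p : ℝ} (hp : 1 ≤ p) {n : ℕ}
    (y : Fin n → lp (fun _ : ℕ => ℝ) (ENNReal.ofReal p)) (i₀ : Fin n)
    (u v : lp (fun _ : ℕ => ℝ) (ENNReal.ofReal p)) :
    lpNNorm p (update y i₀ (u + v)) ≤ lpNNorm p (update y i₀ u) + lpNNorm p (update y i₀ v) := by
  have : Fact (1 ≤ ENNReal.ofReal p) := ⟨ENNReal.one_le_ofReal.mpr hp⟩
  simp only [lpNNorm_eq_mul_norm_detMinors (by linarith), lp.detMinors_update_add, ← mul_add]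
  gcongr
  exact norm_add_le _ _

/-- For `1 ≤ p < ∞`, `‖·,…,·‖_p` on `ℓ^p` satisfies the triangle inequality in the
first variable: `‖x₁ + x', x₂, …, xₙ‖_p ≤ ‖x₁,…,xₙ‖_p + ‖x', x₂,…,xₙ‖_p`. -/
theorem stmt18 (p : ℝ) (hp : 1 ≤ p) (n : ℕ)
    (x : Fin (n + 1) → lp (fun _ : ℕ => ℝ) (ENNReal.ofReal p))
    (x' : lp (fun _ : ℕ => ℝ) (ENNReal.ofReal p)) :
    lpNNorm p (Function.update x 0 (x 0 + x')) ≤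
      lpNNorm p x + lpNNorm p (Function.update x 0 x') := by
  simpa only [update_eq_self] using lpNNorm_update_add_le hp x 0 (x 0) x'
end
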